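/- Suppose (u₀,r₀,t₀,v₀,ρ₀) satisfy Φ(u₀,r₀,t₀;v₀,ρ₀) = 0 and t₀² = r₀² + ρ₀² (equivalently Rot(Φ_{t₀}) vanishes, assuming r₀t₀ρ₀ ≠ 0). Let M := M(Φ_{t₀})(u₀,r₀;v₀,ρ₀) be the 3×3 Monge–Ampère matrix. Then the vector V := (1, u₀−v₀, −ρ₀)ᵀ satisfies M·V = 0, and the vector U := (1, −(u₀−v₀), −r₀) satisfies Uᵀ·M = 0. -/

import Mathlib

/-!
All first and second partials of `Φ` are explicit polynomials. On the fold `t² = r² + ρ²` one has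
`r² - ρ² + t² = 2r²` and `ρ² - r² + t² = 2ρ²`, and `Φ = 0` becomes `(u - v)² = b²r²ρ²`;
with these the Monge–Ampère matrix is explicit and `V`, `U` are annihilated row by row.
-/

/-- The defining function Φ(u,r,t;v,ρ) = (u−v)² − (b/2)²(4r²ρ² − (r²+ρ²−t²)²). -/
noncomputable def Phi (b u r t v ρ : ℝ) : ℝ :=
  (u - v) ^ 2 - (b / 2) ^ 2 * (4 * r ^ 2 * ρ ^ 2 - (r ^ 2 + ρ ^ 2 - t ^ 2) ^ 2)

/-- ∂_u Φ -/
noncomputable def Pu (b u r t v ρ : ℝ) : ℝ := deriv (fun u' => Phi b u' r t v ρ) u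
/-- ∂_r Φ -/
noncomputable def Pr (b u r t v ρ : ℝ) : ℝ := deriv (fun r' => Phi b u r' t v ρ) r
/-- ∂_t Φ -/
noncomputable def Pt (b u r t v ρ : ℝ) : ℝ := deriv (fun t' => Phi b u r t' v ρ) t
/-- ∂_v Φ -/
noncomputable def Pv (b u r t v ρ : ℝ) : ℝ := deriv (fun v' => Phi b u r t v' ρ) v
/-- ∂_ρ Φ -/
noncomputable def Pp (b u r t v ρ : ℝ) : ℝ := deriv (fun ρ' => Phi b u r t v ρ') ρ
/-- ∂²_{uv} Φ -/
noncomputable def Puv (b u r t v ρ : ℝ) : ℝ := deriv (fun u' => Pv b u' r t v ρ) u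
/-- ∂²_{uρ} Φ -/
noncomputable def Pup (b u r t v ρ : ℝ) : ℝ := deriv (fun u' => Pp b u' r t v ρ) u
/-- ∂²_{rv} Φ -/
noncomputable def Prv (b u r t v ρ : ℝ) : ℝ := deriv (fun r' => Pv b u r' t v ρ) r
/-- ∂²_{rρ} Φ -/
noncomputable def Prp (b u r t v ρ : ℝ) : ℝ := deriv (fun r' => Pp b u r' t v ρ) r
/-- ∂²_{tv} Φ -/
noncomputable def Ptv (b u r t v ρ : ℝ) : ℝ := deriv (fun t' => Pv b u r t' v ρ) t
/-- ∂²_{tρ} Φ -/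
noncomputable def Ptp (b u r t v ρ : ℝ) : ℝ := deriv (fun t' => Pp b u r t' v ρ) t
/-- ∂²_{vv} Φ -/
noncomputable def Pvv (b u r t v ρ : ℝ) : ℝ := deriv (fun v' => Pv b u r t v' ρ) v
/-- ∂²_{vρ} Φ -/
noncomputable def Pvp (b u r t v ρ : ℝ) : ℝ := deriv (fun v' => Pp b u r t v' ρ) v
/-- ∂²_{ρv} Φ -/
noncomputable def Ppv (b u r t v ρ : ℝ) : ℝ := deriv (fun ρ' => Pv b u r t v ρ') ρ
/-- ∂²_{ρρ} Φ -/
noncomputable def Ppp (b u r t v ρ : ℝ) : ℝ := deriv (fun ρ' => Pp b u r t v ρ') ρ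

section Derivatives

variable (b u r t v ρ : ℝ)

lemma hasDerivAt_Phi_u : HasDerivAt (fun u' => Phi b u' r t v ρ) (2 * (u - v)) u :=
  ((((hasDerivAt_id u).sub_const v).pow 2).sub_const _).congr_deriv (by simp)

lemma hasDerivAt_Phi_v : HasDerivAt (fun v' => Phi b u r t v' ρ) (-2 * (u - v)) v :=
  ((((hasDerivAt_id v).const_sub u).pow 2).sub_const _).congr_deriv (by simp)

lemma hasDerivAt_Phi_r :
    HasDerivAt (fun r' => Phi b u r' t v ρ) (-b ^ 2 * r * (ρ ^ 2 - r ^ 2 + t ^ 2)) r :=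
  ((hasDerivAt_const r _).sub (((((hasDerivAt_pow 2 r).const_mul 4).mul_const (ρ ^ 2)).sub
    ((((hasDerivAt_pow 2 r).add_const (ρ ^ 2)).sub_const (t ^ 2)).pow 2)).const_mul
      ((b / 2) ^ 2))).congr_deriv (by push_cast; ring)

lemma hasDerivAt_Phi_ρ :
    HasDerivAt (fun ρ' => Phi b u r t v ρ') (-b ^ 2 * ρ * (r ^ 2 - ρ ^ 2 + t ^ 2)) ρ :=
  ((hasDerivAt_const ρ _).sub ((((hasDerivAt_pow 2 ρ).const_mul (4 * r ^ 2)).sub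
    ((((hasDerivAt_pow 2 ρ).const_add (r ^ 2)).sub_const (t ^ 2)).pow 2)).const_mul
      ((b / 2) ^ 2))).congr_deriv (by push_cast; ring)

lemma Pu_eq : Pu b u r t v ρ = 2 * (u - v) := (hasDerivAt_Phi_u ..).deriv

lemma Pv_eq : Pv b u r t v ρ = -2 * (u - v) := (hasDerivAt_Phi_v ..).deriv

lemma Pr_eq : Pr b u r t v ρ = -b ^ 2 * r * (ρ ^ 2 - r ^ 2 + t ^ 2) := (hasDerivAt_Phi_r ..).deriv

lemma Pp_eq : Pp b u r t v ρ = -b ^ 2 * ρ * (r ^ 2 - ρ ^ 2 + t ^ 2) := (hasDerivAt_Phi_ρ ..).deriv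

lemma Puv_eq : Puv b u r t v ρ = -2 := by
  simp only [Puv, Pv_eq]
  exact (((hasDerivAt_id u).sub_const v).const_mul (-2)).deriv.trans (by simp)

lemma Pup_eq : Pup b u r t v ρ = 0 := by
  simp only [Pup, Pp_eq, deriv_const]

lemma Prv_eq : Prv b u r t v ρ = 0 := by
  simp only [Prv, Pv_eq, deriv_const]

lemma Prp_eq : Prp b u r t v ρ = -2 * b ^ 2 * r * ρ := by
  simp only [Prp, Pp_eq]
  exact ((((hasDerivAt_pow 2 r).sub_const (ρ ^ 2)).add_const (t ^ 2)).const_mul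
    (-b ^ 2 * ρ)).deriv.trans (by push_cast; ring)

end Derivatives

/-- `M(Φ_t)` at a point of the fold where `Φ = 0`, in terms of `w = u - v`. -/
def foldMatrix (b w r ρ : ℝ) : Matrix (Fin 3) (Fin 3) ℝ :=
  !![0, -2 * w, -2 * b ^ 2 * r ^ 2 * ρ;
     2 * w, -2, 0;
     -2 * b ^ 2 * r * ρ ^ 2, 0, -2 * b ^ 2 * r * ρ]

lemma mongeAmpere_eq_foldMatrix {b u r t v ρ : ℝ} (hΦ : Phi b u r t v ρ = 0)
    (hfold : t ^ 2 = r ^ 2 + ρ ^ 2) :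
    !![Phi b u r t v ρ, Pv b u r t v ρ, Pp b u r t v ρ;
       Pu b u r t v ρ, Puv b u r t v ρ, Pup b u r t v ρ;
       Pr b u r t v ρ, Prv b u r t v ρ, Prp b u r t v ρ] = foldMatrix b (u - v) r ρ := by
  rw [hΦ, Pu_eq, Pv_eq, Pr_eq, Pp_eq, Puv_eq, Pup_eq, Prv_eq, Prp_eq,
    show ρ ^ 2 - r ^ 2 + t ^ 2 = 2 * ρ ^ 2 by linarith,
    show r ^ 2 - ρ ^ 2 + t ^ 2 = 2 * r ^ 2 by linarith, foldMatrix]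
  ring_nf

lemma sq_sub_eq_of_Phi_eq_zero_of_fold {b u r t v ρ : ℝ} (hΦ : Phi b u r t v ρ = 0)
    (hfold : t ^ 2 = r ^ 2 + ρ ^ 2) : (u - v) ^ 2 = b ^ 2 * r ^ 2 * ρ ^ 2 := by
  rw [Phi, hfold] at hΦ
  linear_combination hΦ

section FoldMatrix

variable {b w r ρ : ℝ}

lemma foldMatrix_mulVec_eq_zero (hw : w ^ 2 = b ^ 2 * r ^ 2 * ρ ^ 2) :
    (foldMatrix b w r ρ).mulVec ![1, w, -ρ] = 0 := by
  ext i
  fin_cases i <;> simp [foldMatrix, Matrix.mulVec] <;> linarith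

lemma vecMul_foldMatrix_eq_zero (hw : w ^ 2 = b ^ 2 * r ^ 2 * ρ ^ 2) :
    Matrix.vecMul ![1, -w, -r] (foldMatrix b w r ρ) = 0 := by
  ext j
  fin_cases j <;> simp [foldMatrix, Matrix.vecMul] <;> linarith

end FoldMatrix

theorem statement10_general (b u r t v ρ : ℝ)
    (hΦ : Phi b u r t v ρ = 0) (hfold : t ^ 2 = r ^ 2 + ρ ^ 2) :
    Matrix.mulVec !![Phi b u r t v ρ, Pv b u r t v ρ, Pp b u r t v ρ;
                     Pu b u r t v ρ, Puv b u r t v ρ, Pup b u r t v ρ;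
                     Pr b u r t v ρ, Prv b u r t v ρ, Prp b u r t v ρ]
        ![1, u - v, -ρ] = 0 ∧
    Matrix.vecMul ![1, -(u - v), -r]
        !![Phi b u r t v ρ, Pv b u r t v ρ, Pp b u r t v ρ;
           Pu b u r t v ρ, Puv b u r t v ρ, Pup b u r t v ρ;
           Pr b u r t v ρ, Prv b u r t v ρ, Prp b u r t v ρ] = 0 := by
  have hw := sq_sub_eq_of_Phi_eq_zero_of_fold hΦ hfold
  rw [mongeAmpere_eq_foldMatrix hΦ hfold]
  exact ⟨foldMatrix_mulVec_eq_zero hw, vecMul_foldMatrix_eq_zero hw⟩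

/-- At a fold point (Φ = 0 and t² = r² + ρ², with rtρ ≠ 0), the vector
V = (1, u−v, −ρ) spans the kernel and U = (1, −(u−v), −r) the cokernel of the
Monge–Ampère matrix M(Φ_t). -/
theorem statement10 (b u r t v ρ : ℝ) (hb : b ≠ 0) (hrtρ : r * t * ρ ≠ 0)
    (hΦ : Phi b u r t v ρ = 0) (hfold : t ^ 2 = r ^ 2 + ρ ^ 2) :
    Matrix.mulVec !![Phi b u r t v ρ, Pv b u r t v ρ, Pp b u r t v ρ;
                     Pu b u r t v ρ, Puv b u r t v ρ, Pup b u r t v ρ;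
                     Pr b u r t v ρ, Prv b u r t v ρ, Prp b u r t v ρ]
        ![1, u - v, -ρ] = 0 ∧
    Matrix.vecMul ![1, -(u - v), -r]
        !![Phi b u r t v ρ, Pv b u r t v ρ, Pp b u r t v ρ;
           Pu b u r t v ρ, Puv b u r t v ρ, Pup b u r t v ρ;
           Pr b u r t v ρ, Prv b u r t v ρ, Prp b u r t v ρ] = 0 :=
  statement10_general b u r t v ρ hΦ hfold
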